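/- Under the same assumptions, the generalized Ablowitz–Ladik nonlinearity 𝒢 is locally Lipschitz on ℓ²: for φ, ψ ∈ ℓ², ‖𝒢(φ) − 𝒢(ψ)‖_{ℓ²} ≤ 2[√2 q₀^{2p} + 2(2p + 1)(‖φ‖_{ℓ^∞} + ‖ψ‖_{ℓ^∞} + 2‖ζ‖_{ℓ^∞})^{2p}] ‖φ − ψ‖_{ℓ²}. -/

import Mathlib

/-!
With `u = φ + ζ`, `v = ψ + ζ` and `d = φ - ψ`, the difference `𝒢(φ)ₙ - 𝒢(ψ)ₙ` equals
`((|uₙ|²)^p - (|vₙ|²)^p) (uₙ₊₁ + uₙ₋₁) + (|vₙ|²)^p (dₙ₊₁ + dₙ₋₁) - 2 q₀^{2p} dₙ`.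
Both `u` and `v` are bounded by `M = ‖φ‖_∞ + ‖ψ‖_∞ + 2‖ζ‖_∞`, and the mean value theorem for
`x ↦ x^{2p}` on `[0, M]` bounds the first coefficient by `2p M^{2p-1} |dₙ|`. Hence `|𝒢(φ)ₙ - 𝒢(ψ)ₙ|`
is dominated by a combination of `|dₙ|` and `|dₙ₊₁|`, `|dₙ₋₁|`, and Minkowski's inequality in `ℓ²`
together with the shift invariance of the `ℓ²` norm gives the bound.
-/

noncomputable def l2norm (f : ℤ → ℂ) : ℝ := Real.sqrt (∑' n : ℤ, ‖f n‖ ^ 2)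

noncomputable def linfnorm (f : ℤ → ℂ) : ℝ := ⨆ n : ℤ, ‖f n‖

/-- The generalized Ablowitz–Ladik nonlinearity. -/
noncomputable def galNonlin (ζ : ℤ → ℂ) (q0 p : ℝ) (φ : ℤ → ℂ) (n : ℤ) : ℂ :=
  (((‖φ n + ζ n‖ ^ 2) ^ p : ℝ) : ℂ) *
      (φ (n + 1) + φ (n - 1) + ζ (n + 1) + ζ (n - 1))
    - 2 * (((q0 ^ 2) ^ p : ℝ) : ℂ) * (φ n + ζ n)

open scoped ENNReal

theorem Real.abs_rpow_sub_rpow_le {a b M q : ℝ} (ha : 0 ≤ a) (hb : 0 ≤ b) (haM : a ≤ M)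
    (hbM : b ≤ M) (hq : 1 ≤ q) :
    |a ^ q - b ^ q| ≤ q * M ^ (q - 1) * |a - b| := by
  have hderiv : ∀ x ∈ Set.Icc 0 M,
      HasDerivWithinAt (fun x : ℝ => x ^ q) (q * x ^ (q - 1)) (Set.Icc 0 M) x :=
    fun x _ => (Real.hasDerivAt_rpow_const (Or.inr hq)).hasDerivWithinAt
  have hbound : ∀ x ∈ Set.Icc 0 M, ‖q * x ^ (q - 1)‖ ≤ q * M ^ (q - 1) := by
    intro x ⟨hx0, hxM⟩
    rw [Real.norm_of_nonneg (by positivity)]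
    gcongr
  simpa only [Real.norm_eq_abs] using
    (convex_Icc 0 M).norm_image_sub_le_of_norm_hasDerivWithin_le hderiv hbound ⟨hb, hbM⟩ ⟨ha, haM⟩

theorem abs_sq_norm_rpow_sub_le {E : Type*} [SeminormedAddCommGroup E] {x y : E} {M p : ℝ}
    (hx : ‖x‖ ≤ M) (hy : ‖y‖ ≤ M) (hp : 1 ≤ 2 * p) :
    |(‖x‖ ^ 2) ^ p - (‖y‖ ^ 2) ^ p| ≤ 2 * p * M ^ (2 * p - 1) * ‖x - y‖ := by
  simp only [← Real.rpow_two, ← Real.rpow_mul (norm_nonneg _)]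
  calc _ ≤ 2 * p * M ^ (2 * p - 1) * |‖x‖ - ‖y‖| :=
        Real.abs_rpow_sub_rpow_le (norm_nonneg _) (norm_nonneg _) hx hy hp
    _ ≤ 2 * p * M ^ (2 * p - 1) * ‖x - y‖ := by
        have : 0 ≤ M := (norm_nonneg _).trans hx
        gcongr
        exact abs_norm_sub_norm_le x y

theorem Memℓp.comp_equiv {α β : Type*} {E : Type*} [NormedAddCommGroup E] {p : ℝ≥0∞}
    (hp : 0 < p.toReal) {f : α → E} (hf : Memℓp f p) (e : β ≃ α) : Memℓp (f ∘ e) p :=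
  (memℓp_gen_iff hp).2 <| (e.summable_iff (f := fun a => ‖f a‖ ^ p.toReal)).2 <|
    (memℓp_gen_iff hp).1 hf

theorem lp.norm_comp_equiv {α β : Type*} {E : Type*} [NormedAddCommGroup E] {p : ℝ≥0∞}
    (hp : 0 < p.toReal) (f : lp (fun _ : α => E) p) (e : β ≃ α) :
    ‖(⟨f ∘ e, (lp.memℓp f).comp_equiv hp e⟩ : lp (fun _ : β => E) p)‖ = ‖f‖ := by
  rw [lp.norm_eq_tsum_rpow hp, lp.norm_eq_tsum_rpow hp]
  congr 1
  exact e.tsum_eq fun a => ‖f a‖ ^ p.toReal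

theorem l2norm_eq_norm_lp {f : ℤ → ℂ} (hf : Memℓp f 2) :
    l2norm f = ‖(⟨fun n => ‖f n‖, hf.norm⟩ : lp (fun _ : ℤ => ℝ) 2)‖ := by
  rw [lp.norm_eq_tsum_rpow (by norm_num), l2norm, Real.sqrt_eq_rpow]
  norm_num [Real.rpow_two]

theorem l2norm_le_of_norm_le_shifts {f d : ℤ → ℂ} (hd : Memℓp d 2) {K L : ℝ} (hK : 0 ≤ K)
    (hL : 0 ≤ L) (h : ∀ n, ‖f n‖ ≤ K * ‖d n‖ + L * (‖d (n + 1)‖ + ‖d (n - 1)‖)) :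
    l2norm f ≤ (K + 2 * L) * l2norm d := by
  have h2 : 0 < (2 : ℝ≥0∞).toReal := by norm_num
  set W : lp (fun _ : ℤ => ℝ) 2 := ⟨fun n => ‖d n‖, hd.norm⟩
  set Wsucc : lp (fun _ : ℤ => ℝ) 2 := ⟨W ∘ Equiv.addRight 1, W.2.comp_equiv h2 _⟩
  set Wpred : lp (fun _ : ℤ => ℝ) 2 := ⟨W ∘ Equiv.subRight 1, W.2.comp_equiv h2 _⟩
  set G := K • W + L • (Wsucc + Wpred)
  have hfG : ∀ n, ‖f n‖ ≤ ‖G n‖ := fun n => (h n).trans (Real.le_norm_self _)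
  have hf : Memℓp f 2 := G.2.mono' hfG
  calc l2norm f = ‖(⟨fun n => ‖f n‖, hf.norm⟩ : lp (fun _ : ℤ => ℝ) 2)‖ := l2norm_eq_norm_lp hf
    _ ≤ ‖G‖ := lp.norm_mono two_ne_zero fun n => by simpa using hfG n
    _ ≤ K * ‖W‖ + L * (‖Wsucc‖ + ‖Wpred‖) := by
        refine (norm_add_le _ _).trans ?_
        rw [norm_smul, norm_smul, Real.norm_of_nonneg hK, Real.norm_of_nonneg hL]
        gcongr
        exact norm_add_le _ _
    _ = (K + 2 * L) * l2norm d := by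
        rw [lp.norm_comp_equiv h2, lp.norm_comp_equiv h2, l2norm_eq_norm_lp hd]
        ring

theorem norm_galNonlin_sub_le {ζ φ ψ : ℤ → ℂ} {q0 p M : ℝ} (hp : 1 ≤ 2 * p)
    (hφ : ∀ k, ‖φ k + ζ k‖ ≤ M) (hψ : ∀ k, ‖ψ k + ζ k‖ ≤ M) (n : ℤ) :
    ‖galNonlin ζ q0 p φ n - galNonlin ζ q0 p ψ n‖ ≤
      (4 * p * M ^ (2 * p) + 2 * (q0 ^ 2) ^ p) * ‖φ n - ψ n‖ +
        M ^ (2 * p) * (‖φ (n + 1) - ψ (n + 1)‖ + ‖φ (n - 1) - ψ (n - 1)‖) := by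
  set u := φ n + ζ n
  set v := ψ n + ζ n
  set A := (‖u‖ ^ 2) ^ p
  set B := (‖v‖ ^ 2) ^ p
  set c := (q0 ^ 2) ^ p
  set s := φ (n + 1) + φ (n - 1) + ζ (n + 1) + ζ (n - 1)
  have hM : 0 ≤ M := (norm_nonneg _).trans (hφ n)
  have hc : 0 ≤ c := by positivity
  have hA : |A - B| ≤ 2 * p * M ^ (2 * p - 1) * ‖φ n - ψ n‖ := by
    simpa [u, v] using abs_sq_norm_rpow_sub_le (hφ n) (hψ n) hp
  have hB : B ≤ M ^ (2 * p) := by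
    change (‖v‖ ^ 2) ^ p ≤ _
    rw [← Real.rpow_two, ← Real.rpow_mul (norm_nonneg _)]
    exact Real.rpow_le_rpow (norm_nonneg _) (hψ n) (by linarith)
  have hs : ‖s‖ ≤ 2 * M := by
    calc ‖s‖ = ‖(φ (n + 1) + ζ (n + 1)) + (φ (n - 1) + ζ (n - 1))‖ := by
          simp only [s]; ring_nf
      _ ≤ M + M := norm_add_le_of_le (hφ _) (hφ _)
      _ = 2 * M := by ring
  have hMpow : M ^ (2 * p - 1) * M = M ^ (2 * p) := by
    rw [← Real.rpow_add_one' hM (by linarith)]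
    ring_nf
  have hdecomp : galNonlin ζ q0 p φ n - galNonlin ζ q0 p ψ n =
      ((A - B : ℝ) : ℂ) * s + (B : ℂ) * ((φ (n + 1) - ψ (n + 1)) + (φ (n - 1) - ψ (n - 1))) -
        2 * (c : ℂ) * (φ n - ψ n) := by
    simp only [galNonlin, A, B, c, s, u, v]
    push_cast
    ring
  have hB0 : 0 ≤ B := by positivity
  rw [hdecomp]
  calc _ ≤ |A - B| * ‖s‖ + B * (‖φ (n + 1) - ψ (n + 1)‖ + ‖φ (n - 1) - ψ (n - 1)‖) +
          2 * c * ‖φ n - ψ n‖ := by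
        refine (norm_sub_le _ _).trans (add_le_add ((norm_add_le _ _).trans (add_le_add ?_ ?_)) ?_)
        · rw [norm_mul, Complex.norm_real, Real.norm_eq_abs]
        · rw [norm_mul, Complex.norm_real, Real.norm_of_nonneg hB0]
          gcongr
          exact norm_add_le _ _
        · rw [norm_mul, norm_mul, Complex.norm_real, Real.norm_of_nonneg hc, Complex.norm_ofNat]
    _ ≤ 2 * p * M ^ (2 * p - 1) * ‖φ n - ψ n‖ * (2 * M) +
          M ^ (2 * p) * (‖φ (n + 1) - ψ (n + 1)‖ + ‖φ (n - 1) - ψ (n - 1)‖) +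
          2 * c * ‖φ n - ψ n‖ := by gcongr
    _ = _ := by rw [← hMpow]; ring

theorem norm_le_linfnorm {f : ℤ → ℂ} (hf : Memℓp f ∞) (n : ℤ) : ‖f n‖ ≤ linfnorm f :=
  le_ciSup hf.bddAbove n

theorem galNonlin_lipschitz_general (ζ : ℤ → ℂ) (q0 p : ℝ) (hp : 1 ≤ p)
    (hζ : Memℓp ζ ⊤)
    (φ ψ : ℤ → ℂ) (hφ : Memℓp φ 2) (hψ : Memℓp ψ 2) :
    l2norm (fun n => galNonlin ζ q0 p φ n - galNonlin ζ q0 p ψ n) ≤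
      2 * (Real.sqrt 2 * (q0 ^ 2) ^ p +
            2 * (2 * p + 1) *
              (linfnorm φ + linfnorm ψ + 2 * linfnorm ζ) ^ (2 * p)) *
        l2norm (fun n => φ n - ψ n) := by
  have hφ_le := norm_le_linfnorm (hφ.of_exponent_ge le_top)
  have hψ_le := norm_le_linfnorm (hψ.of_exponent_ge le_top)
  have hζ_le := norm_le_linfnorm hζ
  set M := linfnorm φ + linfnorm ψ + 2 * linfnorm ζ
  have hφ0 : 0 ≤ linfnorm φ := (norm_nonneg _).trans (hφ_le 0)
  have hψ0 : 0 ≤ linfnorm ψ := (norm_nonneg _).trans (hψ_le 0)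
  have hφM : ∀ k, ‖φ k + ζ k‖ ≤ M := fun k =>
    (norm_add_le _ _).trans (by linarith [hφ_le k, hζ_le k, norm_nonneg (ζ k)])
  have hψM : ∀ k, ‖ψ k + ζ k‖ ≤ M := fun k =>
    (norm_add_le _ _).trans (by linarith [hψ_le k, hζ_le k, norm_nonneg (ζ k)])
  have hMp : 0 ≤ M ^ (2 * p) := Real.rpow_nonneg ((norm_nonneg _).trans (hφM 0)) _
  have hc : 0 ≤ (q0 ^ 2) ^ p := by positivity
  calc _ ≤ (4 * p * M ^ (2 * p) + 2 * (q0 ^ 2) ^ p + 2 * M ^ (2 * p)) *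
          l2norm (fun n => φ n - ψ n) :=
        l2norm_le_of_norm_le_shifts (hφ.sub hψ) (by nlinarith) hMp
          (norm_galNonlin_sub_le (by linarith) hφM hψM)
    _ ≤ _ := by
        gcongr ?_ * _
        · exact Real.sqrt_nonneg _
        nlinarith [Real.one_le_sqrt.2 one_le_two]

/-- 𝒢 is locally Lipschitz on ℓ². -/
theorem galNonlin_lipschitz (ζ : ℤ → ℂ) (q0 p : ℝ) (hq0 : 0 < q0) (hp : 1 ≤ p)
    (hζ : Memℓp ζ ⊤)
    (φ ψ : ℤ → ℂ) (hφ : Memℓp φ 2) (hψ : Memℓp ψ 2) :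
    l2norm (fun n => galNonlin ζ q0 p φ n - galNonlin ζ q0 p ψ n) ≤
      2 * (Real.sqrt 2 * (q0 ^ 2) ^ p +
            2 * (2 * p + 1) *
              (linfnorm φ + linfnorm ψ + 2 * linfnorm ζ) ^ (2 * p)) *
        l2norm (fun n => φ n - ψ n) :=
  galNonlin_lipschitz_general ζ q0 p hp hζ φ ψ hφ hψ
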